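/- arXiv:1503.01568 — 3 statements merged into one kernel-verified Lean document; each statement's English description precedes it below -/
import Mathlib

section
/- Let μ* ∘ N_K^{-1} be the Poisson distribution with parameter t > 0, i.e. the probability measure ν_t on ℕ with ν_t({i}) = e^{-t} t^i / i!. Then the Shannon entropy f(t) = -∑_{i=0}^∞ ν_t({i}) log ν_t({i}) tends to 0 as t → 0+. -/
/-!
Each term `negMulLog (e^{-t} t^i / i!)` is continuous in `t` and vanishes at `t = 0`, where the
weights become the point mass at `0`. For `t ≤ 1/4` the `i`-th weight is at most `(1/4)^i`, and
`negMulLog x ≤ 2 √x`, so the terms are dominated by the summable sequence `2 (1/2)^i`;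
Tannery's theorem then lets the limit pass through the sum.
-/

open Real Filter Topology

lemma Real.negMulLog_le_two_mul_sqrt {x : ℝ} (hx : 0 ≤ x) : negMulLog x ≤ 2 * √x := by
  have hs : 0 ≤ √x := sqrt_nonneg x
  calc negMulLog x = 2 * √x * negMulLog √x := by
        rw [← mul_self_sqrt hx, negMulLog_mul, sqrt_mul_self hs]; ring
    _ ≤ 2 * √x * (1 - √x) := by gcongr; exact negMulLog_le_one_sub_self hs
    _ ≤ 2 * √x := by nlinarith

lemma exp_neg_mul_pow_div_factorial_le_pow {t : ℝ} (ht : 0 ≤ t) (i : ℕ) :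
    exp (-t) * t ^ i / i.factorial ≤ t ^ i := by
  have hexp : exp (-t) ≤ 1 := exp_le_one_iff.mpr (neg_nonpos.mpr ht)
  have hfac : (1 : ℝ) ≤ i.factorial := by exact_mod_cast i.factorial_pos
  calc exp (-t) * t ^ i / i.factorial ≤ exp (-t) * t ^ i := div_le_self (by positivity) hfac
    _ ≤ t ^ i := mul_le_of_le_one_left (by positivity) hexp

lemma abs_negMulLog_poisson_le {t : ℝ} (ht₀ : 0 ≤ t) (ht : t ≤ 1 / 4) (i : ℕ) :
    |negMulLog (exp (-t) * t ^ i / i.factorial)| ≤ 2 * (1 / 2) ^ i := by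
  set p := exp (-t) * t ^ i / i.factorial
  have hp₀ : 0 ≤ p := by positivity
  have hp : p ≤ (1 / 4) ^ i :=
    (exp_neg_mul_pow_div_factorial_le_pow ht₀ i).trans (pow_le_pow_left₀ ht₀ ht i)
  have hp₁ : p ≤ 1 := hp.trans (pow_le_one₀ (by norm_num) (by norm_num))
  rw [abs_of_nonneg (negMulLog_nonneg hp₀ hp₁)]
  refine (negMulLog_le_two_mul_sqrt hp₀).trans ?_
  gcongr
  rw [sqrt_le_left (by positivity), ← pow_mul, mul_comm, pow_mul]
  norm_num [hp]

lemma tendsto_negMulLog_poisson_nhds_zero (i : ℕ) :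
    Tendsto (fun t : ℝ => negMulLog (exp (-t) * t ^ i / i.factorial)) (𝓝 0) (𝓝 0) := by
  have hcont : Continuous fun t : ℝ => negMulLog (exp (-t) * t ^ i / i.factorial) := by
    fun_prop
  convert hcont.tendsto 0 using 2
  cases i <;> simp

/-- The Shannon entropy of the Poisson distribution with parameter `t`,
`f(t) = -∑_i (e^{-t} t^i / i!) log (e^{-t} t^i / i!)`, tends to `0` as `t → 0+`. -/
theorem poisson_entropy_tendsto_zero :
    Tendsto
      (fun t : ℝ =>
        ∑' i : ℕ, negMulLog (Real.exp (-t) * t ^ i / (Nat.factorial i)))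
      (nhdsWithin 0 (Set.Ioi 0)) (nhds 0) := by
  have hbound : ∀ᶠ t in 𝓝[>] (0 : ℝ), ∀ i : ℕ,
      ‖negMulLog (exp (-t) * t ^ i / i.factorial)‖ ≤ 2 * (1 / 2) ^ i := by
    filter_upwards [Ioo_mem_nhdsGT (by norm_num : (0 : ℝ) < 1 / 4)] with t ht i
    exact abs_negMulLog_poisson_le ht.1.le ht.2.le i
  simpa using tendsto_tsum_of_dominated_convergence (summable_geometric_two.mul_left 2)
    (fun i => (tendsto_negMulLog_poisson_nhds_zero i).mono_left nhdsWithin_le_nhds) hbound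
end

section
/- Let G be a countably infinite discrete group with a Følner sequence. Then one can choose finite subsets F_n, C_{n+1} ⊆ G satisfying: F_0 = {1}, 1 ∈ F_n, #C_n > 1, F_n^{-1}F_nF_nC_{n+1} ⊊ F_{n+1}, F_n c ∩ F_n c' = ∅ for distinct c, c' ∈ C_{n+1}, and additionally #F_n/(#C_1 ⋯ #C_n) → ∞. (Existence of (C,F)-data with infinite-measure normalization for any countable amenable group.) -/
open Pointwise Filter
open scoped symmDiff

/-- Key recursion step: from any finite `F` and any size bound `m`, produce `(F', C')` with
`1 ∈ F'`, `#C' = 2`, `F⁻¹FFC' ⊊ F'`, disjoint translates, and `m ≤ #F'`. -/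
private lemma CF_step {G : Type*} [Group G] [Infinite G] [DecidableEq G]
    (F : Finset G) (m : ℕ) :
    ∃ p : Finset G × Finset G,
      (1 : G) ∈ p.1 ∧ (p.2).card = 2 ∧ (F⁻¹ * F * F * p.2 ⊂ p.1) ∧
      (∀ c ∈ p.2, ∀ c' ∈ p.2, c ≠ c' → Disjoint (F * {c}) (F * {c'})) ∧
      m ≤ p.1.card := by
  obtain ⟨c₀, hc₀⟩ := Infinite.exists_notMem_finset (insert (1 : G) (F⁻¹ * F))
  have hc₀1 : c₀ ≠ 1 := fun h => hc₀ (by simp [h])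
  have hc₀F : c₀ ∉ F⁻¹ * F := fun h => hc₀ (Finset.mem_insert_of_mem h)
  set C' : Finset G := {1, c₀} with hC'
  set S : Finset G := insert 1 (F⁻¹ * F * F * C') with hS
  obtain ⟨t, hst, htc⟩ :=
    Infinite.exists_superset_card_eq S (max m (S.card + 1)) (le_max_of_le_right (Nat.le_succ _))
  refine ⟨(t, C'), hst (Finset.mem_insert_self _ _), ?_, ?_, ?_, ?_⟩
  · simp [hC', hc₀1.symm]
  · have hsub : F⁻¹ * F * F * C' ⊆ t := fun x hx => hst (Finset.mem_insert_of_mem hx)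
    refine Finset.ssubset_iff_subset_ne.mpr ⟨hsub, fun h => ?_⟩
    have h1 : (F⁻¹ * F * F * C').card ≤ S.card := Finset.card_le_card (Finset.subset_insert _ _)
    have h2 : S.card < t.card := by
      rw [htc]; exact lt_of_lt_of_le (Nat.lt_succ_self _) (le_max_right _ _)
    rw [h] at h1
    exact absurd h2 (not_lt.mpr h1)
  · intro c hc c' hc' hne
    have main : Disjoint (F * {(1 : G)}) (F * {c₀}) := by
      rw [Finset.disjoint_left]
      intro x hx hx'
      rw [Finset.mem_mul] at hx hx'
      obtain ⟨a, ha, y, hy, rfl⟩ := hx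
      obtain ⟨b, hb, y', hy', hba⟩ := hx'
      rw [Finset.mem_singleton] at hy hy'
      subst hy
      rw [hy'] at hba
      apply hc₀F
      have : c₀ = b⁻¹ * (a * 1) := by rw [← hba]; group
      rw [this, mul_one]
      exact Finset.mul_mem_mul (Finset.inv_mem_inv hb) ha
    have hcc : c = 1 ∧ c' = c₀ ∨ c = c₀ ∧ c' = 1 := by
      simp only [hC', Finset.mem_insert, Finset.mem_singleton] at hc hc'
      rcases hc with h | h <;> rcases hc' with h' | h' <;> simp_all
    rcases hcc with ⟨rfl, rfl⟩ | ⟨rfl, rfl⟩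
    · exact main
    · exact main.symm
  · rw [htc]; exact le_max_left _ _

/-- Any countably infinite amenable discrete group (given with a Følner sequence) admits
(C,F)-data: finite subsets `Fₙ, C_{n+1}` with `F₀ = {1}`, `1 ∈ Fₙ`, `#C_{n+1} > 1`,
`Fₙ⁻¹FₙFₙC_{n+1} ⊊ F_{n+1}`, disjoint translates `Fₙc`, `c ∈ C_{n+1}`, and
`#Fₙ/(#C₁⋯#Cₙ) → ∞`. -/
theorem CF_data_exists {G : Type*} [Group G] [Countable G] [Infinite G] [DecidableEq G]
    (A : ℕ → Finset G) (hAne : ∀ n, (A n).Nonempty)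
    (hFolner : ∀ g : G, Tendsto
      (fun n => (((g • A n) ∆ A n).card : ℝ) / (A n).card) atTop (nhds 0)) :
    ∃ F C : ℕ → Finset G,
      F 0 = {1} ∧
      (∀ n, 1 ≤ n → (1 : G) ∈ F n) ∧
      (∀ n, 1 < (C (n + 1)).card) ∧
      (∀ n, (F n)⁻¹ * F n * F n * C (n + 1) ⊂ F (n + 1)) ∧
      (∀ n, ∀ c ∈ C (n + 1), ∀ c' ∈ C (n + 1), c ≠ c' →
        Disjoint (F n * {c}) (F n * {c'})) ∧
      Tendsto
        (fun n => ((F n).card : ℝ) / ∏ i ∈ Finset.range n, ((C (i + 1)).card : ℝ))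
        atTop atTop := by
  classical
  -- recursively choose the pairs `(F (n+1), C (n+1))`
  let f : ℕ → Finset G × Finset G := fun n =>
    Nat.rec (({1} : Finset G), (∅ : Finset G))
      (fun n p => Classical.choose (CF_step p.1 (2 ^ (n + 1) * (n + 2)))) n
  have hfs : ∀ n, f (n + 1) = Classical.choose (CF_step (f n).1 (2 ^ (n + 1) * (n + 2))) :=
    fun n => rfl
  have spec : ∀ n, (1 : G) ∈ (f (n + 1)).1 ∧ ((f (n + 1)).2).card = 2 ∧
      ((f n).1⁻¹ * (f n).1 * (f n).1 * (f (n + 1)).2 ⊂ (f (n + 1)).1) ∧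
      (∀ c ∈ (f (n + 1)).2, ∀ c' ∈ (f (n + 1)).2, c ≠ c' →
        Disjoint ((f n).1 * {c}) ((f n).1 * {c'})) ∧
      2 ^ (n + 1) * (n + 2) ≤ (f (n + 1)).1.card := by
    intro n
    rw [hfs n]
    exact Classical.choose_spec (CF_step (f n).1 (2 ^ (n + 1) * (n + 2)))
  refine ⟨fun n => (f n).1, fun n => (f n).2, rfl, ?_, ?_, fun n => (spec n).2.2.1,
    fun n => (spec n).2.2.2.1, ?_⟩
  · rintro (_ | n) hn
    · omega
    · exact (spec n).1
  · intro n
    rw [(spec n).2.1]; omega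
  · -- growth of the normalization
    have hprod : ∀ n, ∏ i ∈ Finset.range n, (((f (i + 1)).2).card : ℝ) = 2 ^ n := by
      intro n
      rw [Finset.prod_congr rfl (fun i _ => by rw [(spec i).2.1])]
      simp
    have hbig : ∀ n, 1 ≤ n → (2 : ℝ) ^ n * (n + 1) ≤ ((f n).1.card : ℝ) := by
      rintro (_ | n) hn
      · omega
      · have h := (spec n).2.2.2.2
        have h' : ((2 ^ (n + 1) * (n + 2) : ℕ) : ℝ) ≤ ((f (n + 1)).1.card : ℝ) :=
          Nat.cast_le.mpr h
        push_cast at h' ⊢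
        nlinarith [h']
    apply tendsto_atTop_mono' _ _ (tendsto_natCast_atTop_atTop (R := ℝ))
    filter_upwards [eventually_ge_atTop 1] with n hn
    rw [hprod]
    have h2 : (0 : ℝ) < 2 ^ n := by positivity
    rw [le_div_iff₀ h2]
    calc (n : ℝ) * 2 ^ n ≤ (2 : ℝ) ^ n * (n + 1) := by nlinarith
      _ ≤ _ := hbig n hn
end

section
/- Let (X, μ, T) be a measure-preserving G-action on a σ-finite measure space such that the Koopman operators U_T(g) on L²(X, μ) satisfy U_T(g) → 0 weakly as g → ∞, and let H = ℂ ⊕ ⨁_{n≥1} L²(X,μ)^{⊙n} be the symmetric Fock space with the induced (second-quantized) unitaries Γ(U_T(g)). Then Γ(U_T(g)) converges weakly, as g → ∞, to the orthogonal projection onto the vacuum (constants) component ℂ. -/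
open Filter Topology

/-!
The inner product of two elementary symmetric tensors of degree `n` is `1/n!` times the permanent
`∑_σ ∏ᵢ ⟪U(g) ξᵢ, η_{σ(i)}⟫`. For `n ≥ 1` every term is a product of at least one
matrix coefficient of `U(g)`, each tending to `0`, so only the vacuum term survives in the limit.
-/

theorem tendsto_finset_prod_nhds_zero {ι α R : Type*} [CommMonoidWithZero R]
    [TopologicalSpace R] [ContinuousMul R] {l : Filter α} {s : Finset ι} (hs : s.Nonempty)
    {f : ι → α → R} (hf : ∀ i ∈ s, Tendsto (f i) l (𝓝 0)) :
    Tendsto (fun x => ∏ i ∈ s, f i x) l (𝓝 0) := by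
  simpa [zero_pow hs.card_ne_zero] using tendsto_finsetProd s hf

theorem tendsto_sum_perm_prod_inner_nhds_zero {α K : Type*} [NormedAddCommGroup K]
    [InnerProductSpace ℂ K] {l : Filter α} {U : α → K → K}
    (hweak : ∀ ξ η : K, Tendsto (fun x => (inner ℂ (U x ξ) η : ℂ)) l (𝓝 0))
    {n : ℕ} (hn : n ≠ 0) (ξ η : Fin n → K) :
    Tendsto (fun x => ∑ σ : Equiv.Perm (Fin n), ∏ i, (inner ℂ (U x (ξ i)) (η (σ i)) : ℂ))
      l (𝓝 0) := by
  have : Nonempty (Fin n) := ⟨⟨0, Nat.pos_of_ne_zero hn⟩⟩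
  simpa using tendsto_finsetSum (Finset.univ : Finset (Equiv.Perm (Fin n))) fun σ _ =>
    tendsto_finset_prod_nhds_zero Finset.univ_nonempty fun i _ => hweak (ξ i) (η (σ i))

/-- The expression is `⟪Γ(U(g)) Ξ, Η⟫` for `Ξ = a ⊕ ⨁_{n=1}^N ξⁿ₁⊙⋯⊙ξⁿₙ` and
`Η = b ⊕ ⨁_{n=1}^N ηⁿ₁⊙⋯⊙ηⁿₙ`; such vectors span a dense subspace of the Fock space, and
`a·conj b` is the coefficient of the vacuum projection. -/
theorem fock_space_second_quantization_weak_convergence_general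
    {G : Type*}
    {K : Type*} [NormedAddCommGroup K] [InnerProductSpace ℂ K]
    (U : G → K →L[ℂ] K)
    (hweak : ∀ ξ η : K,
      Tendsto (fun g : G => (inner ℂ (U g ξ) η : ℂ)) cofinite (nhds 0)) :
    ∀ N : ℕ, ∀ a b : ℂ, ∀ ξ η : (n : ℕ) → Fin n → K,
      Tendsto
        (fun g : G => a * (starRingEnd ℂ) b +
          ∑ n ∈ Finset.Icc 1 N, ((Nat.factorial n : ℂ))⁻¹ *
            ∑ σ : Equiv.Perm (Fin n), ∏ i : Fin n,
              (inner ℂ (U g (ξ n i)) (η n (σ i)) : ℂ))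
        cofinite (nhds (a * (starRingEnd ℂ) b)) := by
  intro N a b ξ η
  have hfock : Tendsto (fun g : G => ∑ n ∈ Finset.Icc 1 N, ((Nat.factorial n : ℂ))⁻¹ *
      ∑ σ : Equiv.Perm (Fin n), ∏ i : Fin n, (inner ℂ (U g (ξ n i)) (η n (σ i)) : ℂ))
      cofinite (𝓝 0) := by
    simpa using tendsto_finsetSum (Finset.Icc 1 N) fun n hn =>
      (tendsto_sum_perm_prod_inner_nhds_zero (U := fun g => U g) hweak
        (Nat.one_le_iff_ne_zero.mp (Finset.mem_Icc.mp hn).1) (ξ n) (η n)).const_mul ((n.factorial : ℂ))⁻¹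
  simpa using tendsto_const_nhds.add hfock

/-- Second quantization: if the (Koopman) unitaries `U(g)` on a Hilbert space `K`
(= `L²(X, μ)`) converge weakly to `0` along the cofinite filter, then on the symmetric
Fock space `ℂ ⊕ ⨁_{n ≥ 1} K^{⊙n}` the operators `Γ(U(g))` converge weakly to the
orthogonal projection onto the vacuum component `ℂ`.  On the dense span of vectors with
vacuum components `a, b` and finitely many elementary symmetric tensor components
`ξⁿ₁⊙⋯⊙ξⁿₙ`, `ηⁿ₁⊙⋯⊙ηⁿₙ` (`1 ≤ n ≤ N`), the matrix coefficient of `Γ(U(g))` is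
`a·conj b + ∑_{n=1}^N (1/n!) ∑_{σ ∈ Sₙ} ∏ᵢ ⟪U(g) ξⁿᵢ, ηⁿ_{σ(i)}⟫`, and the claim is that
it converges to the vacuum part `a·conj b`. -/
theorem fock_space_second_quantization_weak_convergence
    {G : Type*} [Group G] [Countable G]
    {K : Type*} [NormedAddCommGroup K] [InnerProductSpace ℂ K]
    (U : G → K →L[ℂ] K) (hUnit : ∀ g : G, ∀ ξ : K, ‖U g ξ‖ = ‖ξ‖)
    (hUrep : ∀ g h : G, ∀ ξ : K, U (g * h) ξ = U g (U h ξ))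
    (hweak : ∀ ξ η : K,
      Tendsto (fun g : G => (inner ℂ (U g ξ) η : ℂ)) cofinite (nhds 0)) :
    ∀ N : ℕ, ∀ a b : ℂ, ∀ ξ η : (n : ℕ) → Fin n → K,
      Tendsto
        (fun g : G => a * (starRingEnd ℂ) b +
          ∑ n ∈ Finset.Icc 1 N, ((Nat.factorial n : ℂ))⁻¹ *
            ∑ σ : Equiv.Perm (Fin n), ∏ i : Fin n,
              (inner ℂ (U g (ξ n i)) (η n (σ i)) : ℂ))
        cofinite (nhds (a * (starRingEnd ℂ) b)) :=
  fock_space_second_quantization_weak_convergence_general U hweak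
end
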